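/- arXiv:2404.07974 — 2 statements merged into one kernel-verified Lean document; each statement's English description precedes it below -/
import Mathlib

section
/- Suppose U is a unitary on (ℂ²)^{⊗n} and R ∈ SO(2n) satisfies U c_j U† = Σ_{i=1}^{2n} R_{ij} c_i for all j. Then for any index sets I = {i_1<···<i_m} and J = {j_1<···<j_k}, the superoperator matrix element χ(I,J) = 2^{-n} Tr(c_I† U c_J U†) equals δ_{m,k} · det(R_{I,J}), where R_{I,J} is the k×k submatrix of R with rows in I and columns in J. -/
open Matrix

namespace MGaux

open Finset

variable {N : ℕ}


variable {N : ℕ}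

/-- ordered monomial in the Clifford generators -/
def mono {β : Type*} [Ring β] (c : Fin N → β) (S : Finset (Fin N)) : β :=
  ((S.sort (· ≤ ·)).map c).prod

/-- number of elements of `S` less than `i` -/
def nlt (i : Fin N) (S : Finset (Fin N)) : ℕ := (S.filter (· < i)).card

/-- toggle membership of `i` in `S` -/
def tog (i : Fin N) (S : Finset (Fin N)) : Finset (Fin N) :=
  if i ∈ S then S.erase i else insert i S

lemma tog_invol (i : Fin N) (S : Finset (Fin N)) : tog i (tog i S) = S := by
  unfold tog
  by_cases h : i ∈ S
  · simp [h, Finset.notMem_erase, Finset.insert_erase h]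
  · simp [h, Finset.erase_insert h]

lemma nlt_tog (i : Fin N) (S : Finset (Fin N)) : nlt i (tog i S) = nlt i S := by
  unfold tog nlt
  by_cases h : i ∈ S
  · simp only [h, if_true, Finset.filter_erase]
    rw [Finset.erase_eq_of_notMem]
    simp
  · simp only [h, if_false, Finset.filter_insert, lt_irrefl, if_neg (lt_irrefl i)]

section ringlemmas

variable {β : Type*} [Ring β] (c : Fin N → β)

lemma mono_empty : mono c ∅ = 1 := by simp [mono]

lemma mono_singleton (i : Fin N) : mono c {i} = c i := by simp [mono]

lemma mono_insert {a : Fin N} {S : Finset (Fin N)} (ha : ∀ x ∈ S, a < x) :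
    mono c (insert a S) = c a * mono c S := by
  have h2 : a ∉ S := fun h => absurd (ha a h) (lt_irrefl a)
  unfold mono
  rw [Finset.sort_insert _ (fun b hb => (ha b hb).le) h2, List.map_cons, List.prod_cons]

end ringlemmas

section matlemmas

variable {m : Type*} [Fintype m] [DecidableEq m] (c : Fin N → Matrix m m ℂ)
variable (hanti : ∀ i j, c i * c j + c j * c i = (2 : ℂ) • (if i = j then 1 else 0))

include hanti

lemma c_sq (i : Fin N) : c i * c i = 1 := by
  have h := hanti i i
  rw [if_pos rfl] at h
  have h2 : (2 : ℂ) • (c i * c i) = (2 : ℂ) • (1 : Matrix m m ℂ) := by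
    rw [two_smul]; exact h
  exact smul_right_injective _ (by norm_num : (2:ℂ) ≠ 0) h2

lemma c_swap {i j : Fin N} (h : i ≠ j) : c i * c j = -(c j * c i) := by
  have h2 := hanti i j
  rw [if_neg h, smul_zero] at h2
  linear_combination (norm := abel) h2

lemma c_mul_mono (i : Fin N) (S : Finset (Fin N)) :
    c i * mono c S = ((-1 : ℂ) ^ (nlt i S)) • mono c (tog i S) := by
  induction S using Finset.strongInduction with
  | _ S IH =>
  rcases S.eq_empty_or_nonempty with rfl | hS
  · simp [mono_empty, tog, nlt, mono_singleton]
  · set a := S.min' hS with hadef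
    have haS : a ∈ S := S.min'_mem hS
    have hSeq : S = insert a (S.erase a) := (Finset.insert_erase haS).symm
    have hlt : ∀ x ∈ S.erase a, a < x := fun x hx =>
      Finset.min'_lt_of_mem_erase_min' S hS (by rwa [← hadef])
    have hmS : mono c S = c a * mono c (S.erase a) := by
      conv_lhs => rw [hSeq]
      exact mono_insert c hlt
    rcases lt_trichotomy i a with hia | rfl | hai
    · -- i < a : i is below everything
      have hnotmem : i ∉ S := fun h => absurd (S.min'_le i h) (not_le.mpr hia)
      have hltS : ∀ x ∈ S, i < x := fun x hx => lt_of_lt_of_le hia (S.min'_le x hx)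
      have h1 : nlt i S = 0 := by
        unfold nlt
        rw [Finset.card_eq_zero, Finset.filter_eq_empty_iff]
        exact fun {x} hx => not_lt.mpr (hltS x hx).le
      rw [h1, pow_zero, one_smul]
      unfold tog
      rw [if_neg hnotmem, mono_insert c hltS]
    · -- i = a
      have h1 : nlt a S = 0 := by
        unfold nlt
        rw [Finset.card_eq_zero, Finset.filter_eq_empty_iff]
        exact fun {x} hx => not_lt.mpr (S.min'_le x hx)
      rw [h1, pow_zero, one_smul]
      unfold tog
      rw [if_pos haS, hmS, ← mul_assoc, c_sq c hanti, one_mul]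
    · -- a < i
      have hne : S.erase a ⊂ S := Finset.erase_ssubset haS
      have hIH := IH (S.erase a) hne
      have hswap : c i * c a = -(c a * c i) := c_swap c hanti (ne_of_gt hai)
      have step1 : c i * mono c S = -(c a * (c i * mono c (S.erase a))) := by
        rw [hmS, ← mul_assoc, hswap, neg_mul, mul_assoc]
      have hmem_tog : ∀ x ∈ tog i (S.erase a), a < x := by
        intro x hx
        unfold tog at hx
        by_cases h : i ∈ S.erase a
        · rw [if_pos h] at hx
          exact hlt x (Finset.mem_of_mem_erase hx)
        · rw [if_neg h] at hx
          rcases Finset.mem_insert.mp hx with rfl | hx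
          · exact hai
          · exact hlt x hx
      have hnotmem_a : a ∉ tog i (S.erase a) := fun h => absurd (hmem_tog a h) (lt_irrefl a)
      have hinsert_tog : insert a (tog i (S.erase a)) = tog i S := by
        unfold tog
        by_cases h : i ∈ S.erase a
        · have hiS : i ∈ S := Finset.mem_of_mem_erase h
          rw [if_pos h, if_pos hiS, ← Finset.erase_insert_of_ne (ne_of_gt hai).symm,
            ← hSeq]
        · have hiS : i ∉ S := by
            intro hiS
            exact h (Finset.mem_erase.mpr ⟨(ne_of_gt hai), hiS⟩)
          rw [if_neg h, if_neg hiS, Finset.insert_comm, ← hSeq]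
      have hnlt : nlt i S = nlt i (S.erase a) + 1 := by
        unfold nlt
        conv_lhs => rw [hSeq]
        rw [Finset.filter_insert, if_pos hai, Finset.card_insert_of_notMem]
        intro h
        exact (Finset.mem_erase.mp (Finset.mem_filter.mp h).1).1 rfl
      rw [step1, hIH, hnlt]
      rw [mul_smul_comm, ← neg_smul]
      rw [← mono_insert c hmem_tog, hinsert_tog]
      rw [pow_succ]
      ring_nf

end matlemmas


lemma emb_congr {k : ℕ} {S₁ S₂ : Finset (Fin N)} (h : S₁ = S₂) (h₁ : S₁.card = k)
    (h₂ : S₂.card = k) : ⇑(S₁.orderEmbOfFin h₁) = ⇑(S₂.orderEmbOfFin h₂) := by subst h; rfl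



lemma card_filter_lt_fin {k : ℕ} (q : Fin k) :
    (Finset.univ.filter (fun q' : Fin k => q' < q)).card = q := by
  have : Finset.univ.filter (fun q' : Fin k => q' < q) = Finset.Iio q := by
    ext x; simp
  rw [this, Fin.card_Iio]

/-- position lemma -/
lemma card_filter_lt_emb {k : ℕ} (S : Finset (Fin N)) (h : S.card = k) (q : Fin k) :
    (S.filter (· < S.orderEmbOfFin h q)).card = q := by
  have himg : S.filter (· < S.orderEmbOfFin h q) =
      Finset.image (S.orderEmbOfFin h) (Finset.univ.filter (fun q' => q' < q)) := by
    ext x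
    simp only [Finset.mem_filter, Finset.mem_image, Finset.mem_univ, true_and]
    constructor
    · rintro ⟨hxS, hxlt⟩
      have : x ∈ Set.range (S.orderEmbOfFin h) := by
        rw [Finset.range_orderEmbOfFin]; exact hxS
      obtain ⟨q', rfl⟩ := this
      exact ⟨q', (OrderEmbedding.lt_iff_lt _).mp hxlt, rfl⟩
    · rintro ⟨q', hq', rfl⟩
      exact ⟨Finset.orderEmbOfFin_mem S h q', (OrderEmbedding.lt_iff_lt _).mpr hq'⟩
  rw [himg, Finset.card_image_of_injective _ (S.orderEmbOfFin h).injective,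
    card_filter_lt_fin]

/-- erasing an element: embedding composes with succAbove -/
lemma emb_erase {k : ℕ} (S : Finset (Fin N)) (h : S.card = k + 1) (q : Fin (k + 1))
    (h' : (S.erase (S.orderEmbOfFin h q)).card = k) :
    ⇑((S.erase (S.orderEmbOfFin h q)).orderEmbOfFin h') = ⇑(S.orderEmbOfFin h) ∘ q.succAbove := by
  symm
  apply Finset.orderEmbOfFin_unique h'
  · intro x
    simp only [Function.comp_apply]
    exact Finset.mem_erase.mpr ⟨fun hc => (Fin.succAbove_ne q x) ((S.orderEmbOfFin h).injective hc),
      Finset.orderEmbOfFin_mem S h _⟩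
  · exact (S.orderEmbOfFin h).strictMono.comp (Fin.strictMono_succAbove q)

/-- inserting a minimal element: embedding is `Fin.cons` -/
lemma emb_insert_cons {k : ℕ} (j : Fin N) (S : Finset (Fin N)) (hj : ∀ x ∈ S, j < x)
    (h : S.card = k) (h' : (insert j S).card = k + 1) :
    ⇑((insert j S).orderEmbOfFin h') = Fin.cons j ⇑(S.orderEmbOfFin h) := by
  symm
  apply Finset.orderEmbOfFin_unique h'
  · intro x
    refine Fin.cases ?_ (fun q => ?_) x
    · simp
    · simp only [Fin.cons_succ]
      exact Finset.mem_insert_of_mem (Finset.orderEmbOfFin_mem S h q)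
  · intro x y hxy
    rcases Fin.eq_zero_or_eq_succ x with rfl | ⟨qx, rfl⟩ <;>
      rcases Fin.eq_zero_or_eq_succ y with rfl | ⟨qy, rfl⟩
    · exact absurd hxy (lt_irrefl _)
    · simp only [Fin.cons_zero, Fin.cons_succ]
      exact hj _ (Finset.orderEmbOfFin_mem S h qy)
    · exact absurd hxy (Fin.not_lt_zero _)
    · simp only [Fin.cons_succ]
      exact (S.orderEmbOfFin h).strictMono (Fin.succ_lt_succ_iff.mp hxy)


noncomputable def mn (R : Matrix (Fin N) (Fin N) ℝ) (T J : Finset (Fin N)) : ℝ :=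
  if h : T.card = J.card then
    (R.submatrix (T.orderEmbOfFin rfl) (J.orderEmbOfFin h.symm)).det else 0

lemma mn_eq_det (R : Matrix (Fin N) (Fin N) ℝ) {T J : Finset (Fin N)} {k : ℕ}
    (hT : T.card = k) (hJ : J.card = k) :
    mn R T J = (R.submatrix (T.orderEmbOfFin hT) (J.orderEmbOfFin hJ)).det := by
  subst hT
  rw [mn, dif_pos hJ.symm]

lemma mn_eq_zero (R : Matrix (Fin N) (Fin N) ℝ) {T J : Finset (Fin N)}
    (h : T.card ≠ J.card) : mn R T J = 0 := dif_neg h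

/-- sum over T via the order embedding -/
lemma sum_emb {k : ℕ} {M : Type*} [AddCommMonoid M] (T : Finset (Fin N)) (h : T.card = k)
    (f : Fin N → M) : ∑ i ∈ T, f i = ∑ q : Fin k, f (T.orderEmbOfFin h q) := by
  have himg : Finset.image (⇑(T.orderEmbOfFin h)) Finset.univ = T := by
    ext x
    simp only [Finset.mem_image, Finset.mem_univ, true_and]
    constructor
    · rintro ⟨q, rfl⟩; exact Finset.orderEmbOfFin_mem T h q
    · intro hx
      have : x ∈ Set.range (T.orderEmbOfFin h) := by rw [Finset.range_orderEmbOfFin]; exact hx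
      exact this
  conv_lhs => rw [← himg]
  rw [Finset.sum_image (fun x _ y _ hxy => (T.orderEmbOfFin h).injective hxy)]

/-- Lemma A : Laplace expansion -/
lemma lemA (R : Matrix (Fin N) (Fin N) ℝ) {k : ℕ} {T J' : Finset (Fin N)} {j : Fin N}
    (hT : T.card = k + 1) (hJ' : J'.card = k) (hj : ∀ x ∈ J', j < x) :
    ∑ i ∈ T, R i j * (-1 : ℝ) ^ (nlt i T) * mn R (T.erase i) J' = mn R T (insert j J') := by
  have hjJ' : j ∉ J' := fun h => absurd (hj j h) (lt_irrefl j)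
  have hins : (insert j J').card = k + 1 := by rw [Finset.card_insert_of_notMem hjJ', hJ']
  rw [mn_eq_det R hT hins, emb_insert_cons j J' hj hJ' hins]
  rw [det_succ_column_zero]
  rw [sum_emb T hT]
  apply Finset.sum_congr rfl
  intro q _
  have hq_mem : T.orderEmbOfFin hT q ∈ T := Finset.orderEmbOfFin_mem T hT q
  have herase : (T.erase (T.orderEmbOfFin hT q)).card = k := by
    rw [Finset.card_erase_of_mem hq_mem, hT]; omega
  rw [mn_eq_det R herase hJ']
  have hnlt : nlt (T.orderEmbOfFin hT q) T = (q : ℕ) := card_filter_lt_emb T hT q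
  rw [hnlt]
  have hsub : (R.submatrix (⇑(T.orderEmbOfFin hT)) (Fin.cons j ⇑(J'.orderEmbOfFin hJ'))).submatrix
      q.succAbove Fin.succ =
      R.submatrix ((T.erase (T.orderEmbOfFin hT q)).orderEmbOfFin herase) (J'.orderEmbOfFin hJ') := by
    rw [emb_erase T hT q herase]
    ext a b
    simp [Matrix.submatrix_apply, Fin.cons_succ]
  rw [hsub]
  have : (R.submatrix (⇑(T.orderEmbOfFin hT)) (Fin.cons j ⇑(J'.orderEmbOfFin hJ'))) q 0 =
      R (T.orderEmbOfFin hT q) j := by simp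
  rw [this]
  ring

/-- Lemma B : the lowering terms cancel thanks to orthogonality of `R`'s columns. -/
lemma lemB (R : Matrix (Fin N) (Fin N) ℝ) (hRorth : Rᵀ * R = 1) {k : ℕ}
    {T J' : Finset (Fin N)} {j : Fin N}
    (hT : T.card = k) (hJ' : J'.card = k + 1) (hj : j ∉ J') :
    ∑ i ∈ Tᶜ, R i j * (-1 : ℝ) ^ (nlt i T) * mn R (insert i T) J' = 0 := by
  -- the auxiliary matrix with first row taken from row `i` of `R`
  set A : Fin N → Matrix (Fin (k + 1)) (Fin (k + 1)) ℝ :=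
    fun i => R.submatrix (Fin.cons i ⇑(T.orderEmbOfFin hT)) (J'.orderEmbOfFin hJ') with hA
  -- step 1: each term equals R i j * det (A i)
  have hterm : ∀ i ∈ Tᶜ, R i j * (-1 : ℝ) ^ (nlt i T) * mn R (insert i T) J'
      = R i j * (A i).det := by
    intro i hi
    have hiT : i ∉ T := Finset.mem_compl.mp hi
    have hT' : (insert i T).card = k + 1 := by rw [Finset.card_insert_of_notMem hiT, hT]
    rw [mn_eq_det R hT' hJ']
    -- find the position of i in insert i T
    have hmem : i ∈ Set.range ((insert i T).orderEmbOfFin hT') := by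
      rw [Finset.range_orderEmbOfFin]; exact Finset.mem_insert_self i T
    obtain ⟨q, hq⟩ := hmem
    have hqval : (q : ℕ) = nlt i T := by
      have h1 := card_filter_lt_emb (insert i T) hT' q
      rw [hq] at h1
      rw [← h1, nlt]
      congr 1
      rw [Finset.filter_insert, if_neg (lt_irrefl i)]
    -- rows of the (insert i T)-submatrix via succAbove
    have herase : ((insert i T).erase ((insert i T).orderEmbOfFin hT' q)).card = k := by
      rw [hq, Finset.erase_insert hiT, hT]
    have hrows : ⇑((insert i T).orderEmbOfFin hT') ∘ q.succAbove = ⇑(T.orderEmbOfFin hT) := by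
      have h2 := emb_erase (insert i T) hT' q herase
      rw [← h2]
      exact emb_congr (by rw [hq, Finset.erase_insert hiT]) herase hT
    -- expand along row q
    rw [det_succ_row _ q]
    -- expand det (A i) along row 0
    rw [show (A i).det = ∑ l : Fin (k+1), (-1) ^ (l : ℕ) * (A i) 0 l *
        ((A i).submatrix Fin.succ l.succAbove).det from det_succ_row_zero (A i)]
    rw [Finset.mul_sum, Finset.mul_sum]
    apply Finset.sum_congr rfl
    intro l _
    have e1 : (R.submatrix (⇑((insert i T).orderEmbOfFin hT')) ⇑(J'.orderEmbOfFin hJ')).submatrix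
        q.succAbove l.succAbove = (A i).submatrix Fin.succ l.succAbove := by
      ext a b
      simp only [Matrix.submatrix_apply, hA, Function.comp_apply, Fin.cons_succ]
      rw [show ((insert i T).orderEmbOfFin hT') (q.succAbove a) = (T.orderEmbOfFin hT) a from
        congrFun hrows a]
    have e2 : (R.submatrix (⇑((insert i T).orderEmbOfFin hT')) ⇑(J'.orderEmbOfFin hJ')) q l
        = (A i) 0 l := by
      simp only [Matrix.submatrix_apply, hA, Fin.cons_zero, hq]
    rw [e1, e2, hqval]
    ring_nf
    rw [show ((-1:ℝ)) ^ (nlt i T * 2) = 1 by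
      rw [pow_mul]
      rcases neg_one_pow_eq_or ℝ (nlt i T) with h | h <;> rw [h] <;> norm_num]
    ring
  rw [Finset.sum_congr rfl hterm]
  -- step 2: for i ∈ T the determinant vanishes (repeated row)
  have hzero : ∀ i ∈ T, R i j * (A i).det = 0 := by
    intro i hi
    have : i ∈ Set.range (T.orderEmbOfFin hT) := by
      rw [Finset.range_orderEmbOfFin]; exact hi
    obtain ⟨q, hq⟩ := this
    have : (A i).det = 0 := by
      apply Matrix.det_zero_of_row_eq (i := 0) (j := q.succ) (Fin.succ_ne_zero q).symm
      ext b
      simp [hA, Fin.cons_succ, hq]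
    rw [this, mul_zero]
  -- step 3: extend the sum to all of Fin N
  have hfull : ∑ i ∈ Tᶜ, R i j * (A i).det = ∑ i : Fin N, R i j * (A i).det := by
    rw [← Finset.sum_add_sum_compl T]
    rw [Finset.sum_congr rfl hzero]
    simp
  rw [hfull]
  -- step 4: multilinearity in the first row + column orthogonality
  have hupd : ∀ i, A i = (A j).updateRow 0 (fun l => R i (J'.orderEmbOfFin hJ' l)) := by
    intro i
    ext a b
    rcases Fin.eq_zero_or_eq_succ a with rfl | ⟨a', rfl⟩
    · simp [hA, Matrix.updateRow_self]
    · simp [hA, Matrix.updateRow_ne (Fin.succ_ne_zero a'), Fin.cons_succ]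
  calc ∑ i : Fin N, R i j * (A i).det
      = ∑ i : Fin N, ((A j).updateRow 0 ((R i j) • (fun l => R i (J'.orderEmbOfFin hJ' l)))).det := by
        apply Finset.sum_congr rfl
        intro i _
        rw [hupd i, Matrix.det_updateRow_smul]
    _ = ((A j).updateRow 0 (∑ i : Fin N, (R i j) • (fun l => R i (J'.orderEmbOfFin hJ' l)))).det := by
        exact (MultilinearMap.map_update_sum
          (Matrix.detRowAlternating (R := ℝ) (n := Fin (k+1))).toMultilinearMap
          Finset.univ 0 (fun i => (R i j) • (fun l => R i (J'.orderEmbOfFin hJ' l))) (A j)).symm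
    _ = 0 := by
        apply Matrix.det_eq_zero_of_row_eq_zero 0
        intro l
        rw [Matrix.updateRow_self]
        have h0 : (∑ i : Fin N, (R i j) • (fun l => R i (J'.orderEmbOfFin hJ' l))) l
            = ∑ i : Fin N, R i j * R i (J'.orderEmbOfFin hJ' l) := by
          simp [Finset.sum_apply]
        rw [h0]
        have h1 : ∑ i : Fin N, R i j * R i (J'.orderEmbOfFin hJ' l)
            = (Rᵀ * R) j (J'.orderEmbOfFin hJ' l) := by
          rw [Matrix.mul_apply]
          simp [Matrix.transpose_apply]
        rw [h1, hRorth, Matrix.one_apply_ne]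
        intro hc
        exact hj (hc ▸ Finset.orderEmbOfFin_mem J' hJ' l)

/-- combined coefficient lemma -/
lemma lemC (R : Matrix (Fin N) (Fin N) ℝ) (hRorth : Rᵀ * R = 1)
    {J' : Finset (Fin N)} {j : Fin N} (hj : ∀ x ∈ J', j < x) (T : Finset (Fin N)) :
    ∑ i : Fin N, R i j * (-1 : ℝ) ^ (nlt i T) * mn R (tog i T) J' = mn R T (insert j J') := by
  have hjJ' : j ∉ J' := fun h => absurd (hj j h) (lt_irrefl j)
  have hins : (insert j J').card = J'.card + 1 := Finset.card_insert_of_notMem hjJ'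
  have hsplit : ∑ i : Fin N, R i j * (-1 : ℝ) ^ (nlt i T) * mn R (tog i T) J'
      = (∑ i ∈ T, R i j * (-1 : ℝ) ^ (nlt i T) * mn R (T.erase i) J')
        + ∑ i ∈ Tᶜ, R i j * (-1 : ℝ) ^ (nlt i T) * mn R (insert i T) J' := by
    rw [← Finset.sum_add_sum_compl T]
    congr 1
    · exact Finset.sum_congr rfl fun i hi => by rw [tog, if_pos hi]
    · exact Finset.sum_congr rfl fun i hi => by rw [tog, if_neg (Finset.mem_compl.mp hi)]
  rw [hsplit]
  rcases eq_or_ne T.card (J'.card + 1) with hcard | hcard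
  · -- raising case
    have h2 : ∑ i ∈ Tᶜ, R i j * (-1 : ℝ) ^ (nlt i T) * mn R (insert i T) J' = 0 := by
      apply Finset.sum_eq_zero
      intro i hi
      rw [mn_eq_zero R (by
        rw [Finset.card_insert_of_notMem (Finset.mem_compl.mp hi), hcard]; omega), mul_zero]
    rw [h2, add_zero, lemA R hcard rfl hj]
  · rcases eq_or_ne (T.card + 1) J'.card with hcard2 | hcard2
    · -- lowering case
      have h1 : ∑ i ∈ T, R i j * (-1 : ℝ) ^ (nlt i T) * mn R (T.erase i) J' = 0 := by
        apply Finset.sum_eq_zero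
        intro i hi
        rw [mn_eq_zero R (by rw [Finset.card_erase_of_mem hi]; omega), mul_zero]
      have hTcard : T.card = J'.card - 1 := by omega
      rw [h1, zero_add, lemB R hRorth rfl (by omega : J'.card = T.card + 1) hjJ',
        mn_eq_zero R (by omega)]
    · -- degenerate case
      have h1 : ∑ i ∈ T, R i j * (-1 : ℝ) ^ (nlt i T) * mn R (T.erase i) J' = 0 := by
        apply Finset.sum_eq_zero
        intro i hi
        have hT1 : 1 ≤ T.card := Finset.card_pos.mpr ⟨i, hi⟩
        rw [mn_eq_zero R (by rw [Finset.card_erase_of_mem hi]; omega), mul_zero]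
      have h2 : ∑ i ∈ Tᶜ, R i j * (-1 : ℝ) ^ (nlt i T) * mn R (insert i T) J' = 0 := by
        apply Finset.sum_eq_zero
        intro i hi
        rw [mn_eq_zero R (by
          rw [Finset.card_insert_of_notMem (Finset.mem_compl.mp hi)]; omega), mul_zero]
      rw [h1, h2, add_zero, mn_eq_zero R (by omega)]

section main
variable {m : Type*} [Fintype m] [DecidableEq m] (c : Fin N → Matrix m m ℂ)


lemma mn_empty_empty (R : Matrix (Fin N) (Fin N) ℝ) : mn R ∅ ∅ = 1 := by
  rw [mn, dif_pos rfl]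
  exact Matrix.det_fin_zero

/-- MAIN EXPANSION: conjugation by U expands in minors -/
lemma main_expansion
    (hanti : ∀ i j, c i * c j + c j * c i = (2 : ℂ) • (if i = j then 1 else 0))
    (U : Matrix m m ℂ) (hU1 : U * Uᴴ = 1) (hU2 : Uᴴ * U = 1)
    (R : Matrix (Fin N) (Fin N) ℝ) (hRorth : Rᵀ * R = 1)
    (hrot : ∀ j, U * c j * Uᴴ = ∑ i, (R i j : ℂ) • c i) (J : Finset (Fin N)) :
    U * mono c J * Uᴴ = ∑ T : Finset (Fin N), ((mn R T J : ℝ) : ℂ) • mono c T := by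
  induction J using Finset.strongInduction with
  | _ J IH =>
  rcases J.eq_empty_or_nonempty with rfl | hJ
  · rw [mono_empty, mul_one, hU1]
    rw [Finset.sum_eq_single ∅]
    · rw [mn_empty_empty, mono_empty]; norm_num
    · intro T _ hT
      rw [mn_eq_zero R (by simpa [Finset.card_eq_zero] using hT), Complex.ofReal_zero, zero_smul]
    · intro h; exact absurd (Finset.mem_univ ∅) h
  · set j := J.min' hJ with hjdef
    set J' := J.erase j with hJ'def
    have hJeq : J = insert j J' := (Finset.insert_erase (J.min'_mem hJ)).symm
    have hlt : ∀ x ∈ J', j < x := fun x hx =>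
      Finset.min'_lt_of_mem_erase_min' J hJ (by rwa [← hjdef])
    have hmono : mono c J = c j * mono c J' := by
      conv_lhs => rw [hJeq]
      exact mono_insert c hlt
    have hstep : U * mono c J * Uᴴ = (U * c j * Uᴴ) * (U * mono c J' * Uᴴ) := by
      rw [hmono]
      calc U * (c j * mono c J') * Uᴴ = (U * c j) * (Uᴴ * U) * (mono c J' * Uᴴ) := by
            rw [hU2, mul_one]; simp only [Matrix.mul_assoc]
        _ = (U * c j * Uᴴ) * (U * mono c J' * Uᴴ) := by
            simp only [Matrix.mul_assoc]
    have hIH := IH J' (by rw [hJ'def]; exact Finset.erase_ssubset (J.min'_mem hJ))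
    rw [hstep, hrot j, hIH]
    rw [Finset.sum_mul_sum]
    have hterm : ∀ (i : Fin N) (S : Finset (Fin N)),
        ((R i j : ℂ) • c i) * (((mn R S J' : ℝ) : ℂ) • mono c S)
        = ((R i j * mn R S J' * (-1:ℝ)^(nlt i S) : ℝ) : ℂ) • mono c (tog i S) := by
      intro i S
      rw [smul_mul_smul_comm, c_mul_mono c hanti i S, smul_smul]
      push_cast
      ring_nf
    simp only [hterm]
    -- reindex the inner sum via the involution tog i
    have hreindex : ∀ i : Fin N,
        ∑ S : Finset (Fin N), ((R i j * mn R S J' * (-1:ℝ)^(nlt i S) : ℝ) : ℂ) • mono c (tog i S)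
        = ∑ T : Finset (Fin N),
            ((R i j * mn R (tog i T) J' * (-1:ℝ)^(nlt i T) : ℝ) : ℂ) • mono c T := by
      intro i
      apply Fintype.sum_bijective (tog i) (Function.Involutive.bijective (tog_invol i))
      intro S
      rw [tog_invol, nlt_tog]
    simp only [hreindex]
    rw [Finset.sum_comm]
    apply Finset.sum_congr rfl
    intro T _
    rw [← Finset.sum_smul]
    have : ∑ i : Fin N, ((R i j * mn R (tog i T) J' * (-1:ℝ)^(nlt i T) : ℝ) : ℂ)
        = ((mn R T J : ℝ) : ℂ) := by
      rw [← Complex.ofReal_sum]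
      congr 1
      rw [hJeq, ← lemC R hRorth hlt T]
      apply Finset.sum_congr rfl
      intro i _
      ring
    rw [this]

end main

end MGaux

/-- for a matchgate unitary `U` with rotation matrix `R ∈ SO(2n)`
acting on Clifford generators by `U c_j U† = Σ_i R_{ij} c_i`, the superoperator
matrix element `χ(I,J) = 2⁻ⁿ Tr(c_I† U c_J U†)` vanishes unless `|I| = |J|`, in
which case it equals the minor `det R_{I,J}`. -/
theorem matchgate_superoperator_elements (n : ℕ)
    (c : Fin (2 * n) → Matrix (Fin (2 ^ n)) (Fin (2 ^ n)) ℂ)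
    (hherm : ∀ i, (c i).IsHermitian)
    (hanticomm : ∀ i j, c i * c j + c j * c i = (2 : ℂ) • (if i = j then 1 else 0))
    (horth : ∀ I J : Finset (Fin (2 * n)),
      ((2 : ℂ) ^ n)⁻¹ * ((((I.sort (· ≤ ·)).map c).prod)ᴴ *
          ((J.sort (· ≤ ·)).map c).prod).trace = if I = J then 1 else 0)
    (U : Matrix (Fin (2 ^ n)) (Fin (2 ^ n)) ℂ) (hU : U ∈ Matrix.unitaryGroup (Fin (2 ^ n)) ℂ)
    (R : Matrix (Fin (2 * n)) (Fin (2 * n)) ℝ)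
    (hRorth : Rᵀ * R = 1) (hRdet : R.det = 1)
    (hrot : ∀ j, U * c j * Uᴴ = ∑ i, (R i j : ℂ) • c i)
    (I J : Finset (Fin (2 * n))) :
    (I.card ≠ J.card →
      ((2 : ℂ) ^ n)⁻¹ * ((((I.sort (· ≤ ·)).map c).prod)ᴴ * U *
        ((J.sort (· ≤ ·)).map c).prod * Uᴴ).trace = 0) ∧
    (∀ h : I.card = J.card,
      ((2 : ℂ) ^ n)⁻¹ * ((((I.sort (· ≤ ·)).map c).prod)ᴴ * U *
          ((J.sort (· ≤ ·)).map c).prod * Uᴴ).trace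
        = ((R.submatrix (I.orderEmbOfFin rfl) (J.orderEmbOfFin h.symm)).det : ℝ)) := by
  have hU1 : U * Uᴴ = 1 := by
    have := (Unitary.mem_iff.mp hU).2
    rwa [Matrix.star_eq_conjTranspose] at this
  have hU2 : Uᴴ * U = 1 := by
    have := (Unitary.mem_iff.mp hU).1
    rwa [Matrix.star_eq_conjTranspose] at this
  have hexp := MGaux.main_expansion c hanticomm U hU1 hU2 R hRorth hrot J
  have key : ((2 : ℂ) ^ n)⁻¹ * ((((I.sort (· ≤ ·)).map c).prod)ᴴ * U *
      ((J.sort (· ≤ ·)).map c).prod * Uᴴ).trace = ((MGaux.mn R I J : ℝ) : ℂ) := by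
    have hassoc : (((I.sort (· ≤ ·)).map c).prod)ᴴ * U * ((J.sort (· ≤ ·)).map c).prod * Uᴴ
        = (MGaux.mono c I)ᴴ * (U * MGaux.mono c J * Uᴴ) := by
      simp only [MGaux.mono, Matrix.mul_assoc]
    rw [hassoc, hexp, Finset.mul_sum, Matrix.trace_sum, Finset.mul_sum]
    have hterm : ∀ T : Finset (Fin (2 * n)),
        ((2 : ℂ) ^ n)⁻¹ * ((MGaux.mono c I)ᴴ * (((MGaux.mn R T J : ℝ) : ℂ) • MGaux.mono c T)).trace
        = ((MGaux.mn R T J : ℝ) : ℂ) * (if I = T then 1 else 0) := by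
      intro T
      rw [Matrix.mul_smul, Matrix.trace_smul, smul_eq_mul, ← horth I T, MGaux.mono, MGaux.mono]
      ring
    rw [Finset.sum_congr rfl (fun T _ => hterm T)]
    simp [mul_ite]
  constructor
  · intro hne
    rw [key, MGaux.mn_eq_zero R hne, Complex.ofReal_zero]
  · intro h
    rw [key, MGaux.mn, dif_pos h]
end

section
/- For the planar rotation R_k(θ) on ℝ^{2n}, the number of pairs (I,J) of equal-size subsets of {1,...,2n} with nonzero minor det(R_k(θ)_{I,J}) is at most (3/2)·2^{2n}: exactly 2^{2n-1} pairs give minor 1, 2^{2n-1} give minor cos θ, and 2^{2n-2} + 2^{2n-2} give minor ±sin θ (counting with the generic θ where cos θ, sin θ ≠ 0). -/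
open Matrix Real

/-- The planar (Givens) rotation of `ℝⁿ` in the (0-indexed) coordinate plane
`(k, k+1)`, equal to the identity elsewhere. -/
noncomputable def givensRot (n : ℕ) (k : ℕ) (θ : ℝ) : Matrix (Fin n) (Fin n) ℝ :=
  Matrix.of fun i j =>
    if (i : ℕ) = k ∧ (j : ℕ) = k then Real.cos θ
    else if (i : ℕ) = k ∧ (j : ℕ) = k + 1 then Real.sin θ
    else if (i : ℕ) = k + 1 ∧ (j : ℕ) = k then -Real.sin θ
    else if (i : ℕ) = k + 1 ∧ (j : ℕ) = k + 1 then Real.cos θ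
    else if i = j then 1 else 0

/-- The minor of a matrix with rows `I` and columns `J` (zero if `|I| ≠ |J|`). -/
noncomputable def minor {m : ℕ} (M : Matrix (Fin m) (Fin m) ℝ)
    (p : Finset (Fin m) × Finset (Fin m)) : ℝ :=
  if h : p.1.card = p.2.card then
    (M.submatrix (p.1.orderEmbOfFin rfl) (p.2.orderEmbOfFin h.symm)).det
  else 0

/-!
Outside the plane `{a, b} = {k, k + 1}` the rotation `R` is the identity, so a nonzero minor
forces `I` and `J` to agree off `{a, b}`; as `|I| = |J|`, either `I = J` or `J` arises from `I` by
exchanging `a` and `b`. Writing `R = 1 + A B` with `A` of size `2n × 2`, the principal minor on `I`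
is the `2 × 2` determinant `det (1 + B_I A_I)`, which is `1` or `cos θ` according as `I` contains
both or neither of `a, b`, or exactly one of them. Because `a` and `b` are adjacent, exchanging
them does not reorder the columns, so the exchange minors are diagonal determinants equal to
`R a b = sin θ` or `R b a = -sin θ`. What is left is counting subsets by their intersection with
`{a, b}`.
-/

open Finset

namespace Finset

lemma card_filter_snd_eq_and {α β : Type*} [Fintype α] [Fintype β] [DecidableEq β] (f : α → β)
    (P : α × β → Prop) [DecidablePred P] :
    #{p : α × β | p.2 = f p.1 ∧ P p} = #{x | P (x, f x)} := by
  refine card_nbij' Prod.fst (fun x => (x, f x)) ?_ ?_ ?_ ?_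
  · rintro ⟨x, y⟩; simp +contextual
  · intro x hx; simpa using hx
  · rintro ⟨x, y⟩; simp +contextual
  · intro x _; rfl

lemma card_filter_fst_eq_snd_and {α : Type*} [Fintype α] [DecidableEq α] (P : α × α → Prop)
    [DecidablePred P] : #{p : α × α | p.1 = p.2 ∧ P p} = #{x | P (x, x)} := by
  simp_rw [eq_comm (a := Prod.fst _)]
  exact card_filter_snd_eq_and id P

@[to_additive]
lemma prod_orderEmbOfFin {α β : Type*} [LinearOrder α] [CommMonoid β] (s : Finset α)
    {k : ℕ} (h : #s = k) (F : α → β) : ∏ i, F (s.orderEmbOfFin h i) = ∏ x ∈ s, F x := by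
  conv_rhs => rw [← map_orderEmbOfFin_univ s h, prod_map]
  rfl

section Pair

variable {α : Type*} [DecidableEq α] {a b : α}

lemma eq_of_forall_mem_iff_of_ne {K L : Finset α} (h : ∀ x, x ≠ a → x ≠ b → (x ∈ K ↔ x ∈ L))
    (ha : a ∈ K ↔ a ∈ L) (hb : b ∈ K ↔ b ∈ L) : K = L := by
  ext x
  by_cases hxa : x = a
  · exact hxa ▸ ha
  by_cases hxb : x = b
  · exact hxb ▸ hb
  exact h x hxa hxb

lemma card_inter_pair (hab : a ≠ b) (K : Finset α) :
    #(K ∩ {a, b}) = (if a ∈ K then 1 else 0) + (if b ∈ K then 1 else 0) := by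
  by_cases ha : a ∈ K <;> by_cases hb : b ∈ K <;>
    simp [ha, hb, hab, inter_insert_of_mem, inter_insert_of_notMem]

lemma eq_or_swap_of_forall_mem_iff (hab : a ≠ b) {I J : Finset α} (hcard : #I = #J)
    (h : ∀ x, x ≠ a → x ≠ b → (x ∈ I ↔ x ∈ J)) :
    I = J ∨ (J = insert b (I.erase a) ∧ a ∈ I ∧ b ∉ I) ∨
      (J = insert a (I.erase b) ∧ b ∈ I ∧ a ∉ I) := by
  have hsdiff : I \ {a, b} = J \ {a, b} := by
    ext x
    simp only [mem_sdiff, mem_insert, mem_singleton, not_or]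
    exact ⟨fun ⟨hx, hxa, hxb⟩ => ⟨(h x hxa hxb).1 hx, hxa, hxb⟩,
      fun ⟨hx, hxa, hxb⟩ => ⟨(h x hxa hxb).2 hx, hxa, hxb⟩⟩
  have hinter : #(I ∩ {a, b}) = #(J ∩ {a, b}) := by
    have hI := card_sdiff_add_card_inter I {a, b}
    have hJ := card_sdiff_add_card_inter J {a, b}
    rw [hsdiff] at hI
    omega
  rw [card_inter_pair hab, card_inter_pair hab] at hinter
  by_cases hsame : (a ∈ I ↔ a ∈ J) ∧ (b ∈ I ↔ b ∈ J)
  · exact .inl (eq_of_forall_mem_iff_of_ne h hsame.1 hsame.2)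
  right
  have hswap : (a ∈ I ∧ b ∉ I ∧ a ∉ J ∧ b ∈ J) ∨ (b ∈ I ∧ a ∉ I ∧ b ∉ J ∧ a ∈ J) := by
    split_ifs at hinter <;> first | omega | tauto
  rcases hswap with ⟨haI, hbI, haJ, hbJ⟩ | ⟨hbI, haI, hbJ, haJ⟩
  · refine .inl ⟨eq_of_forall_mem_iff_of_ne (a := a) (b := b) (fun x hxa hxb => ?_) ?_ ?_, haI, hbI⟩
    · simp [hxa, hxb, h x hxa hxb]
    · simp [haJ, hab]
    · simp [hbJ]
  · refine .inr ⟨eq_of_forall_mem_iff_of_ne (a := a) (b := b) (fun x hxa hxb => ?_) ?_ ?_, hbI, haI⟩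
    · simp [hxa, hxb, h x hxa hxb]
    · simp [haJ]
    · simp [hbJ, hab.symm]

variable [Fintype α]

lemma card_filter_mem_and_notMem (hab : a ≠ b) :
    #{I : Finset α | a ∈ I ∧ b ∉ I} = 2 ^ (Fintype.card α - 2) := by
  have himage : ({I | a ∈ I ∧ b ∉ I} : Finset (Finset α)) =
      (univ \ {a, b}).powerset.image (insert a) := by
    ext I
    simp only [mem_filter, mem_univ, true_and, mem_image, mem_powerset]
    constructor
    · rintro ⟨haI, hbI⟩
      refine ⟨I.erase a, fun x hx => ?_, insert_erase haI⟩
      grind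
    · rintro ⟨K, hK, rfl⟩
      have : b ∉ K := fun h => by simpa using hK h
      simp [hab.symm, this]
  rw [himage, card_image_of_injOn, card_powerset, card_univ_sdiff, card_pair hab]
  intro K hK L hL hKL
  have haK : a ∉ K := fun h => by simpa using mem_powerset.1 hK h
  have haL : a ∉ L := fun h => by simpa using mem_powerset.1 hL h
  rw [← erase_insert haK, ← erase_insert haL]
  exact congrArg (erase · a) hKL

lemma card_filter_not_mem_iff_mem (hab : a ≠ b) :
    #{I : Finset α | ¬(a ∈ I ↔ b ∈ I)} = 2 ^ (Fintype.card α - 1) := by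
  have hsplit : ({I | ¬(a ∈ I ↔ b ∈ I)} : Finset (Finset α)) =
      ({I | a ∈ I ∧ b ∉ I} : Finset (Finset α)) ∪ ({I | b ∈ I ∧ a ∉ I} : Finset _) := by
    ext I
    simp only [mem_filter, mem_univ, true_and, mem_union]
    tauto
  have hdisj : Disjoint ({I | a ∈ I ∧ b ∉ I} : Finset (Finset α))
      ({I | b ∈ I ∧ a ∉ I} : Finset _) := by
    rw [disjoint_filter]
    tauto
  have htwo : 2 ≤ Fintype.card α := by simpa [card_pair hab] using card_le_univ {a, b}
  rw [hsplit, card_union_of_disjoint hdisj, card_filter_mem_and_notMem hab,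
    card_filter_mem_and_notMem hab.symm, ← two_mul, ← pow_succ']
  congr 1
  omega

lemma card_filter_mem_iff_mem (hab : a ≠ b) :
    #{I : Finset α | a ∈ I ↔ b ∈ I} = 2 ^ (Fintype.card α - 1) := by
  have htotal := card_filter_add_card_filter_not (s := univ) (fun I : Finset α => a ∈ I ↔ b ∈ I)
  have hpos : 1 ≤ Fintype.card α := Fintype.card_pos_iff.2 ⟨a⟩
  rw [card_filter_not_mem_iff_mem hab, card_univ, Fintype.card_finset] at htotal
  have hpow : 2 ^ Fintype.card α = 2 ^ (Fintype.card α - 1) * 2 := by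
    rw [← pow_succ]
    congr 1
    omega
  omega

end Pair

end Finset

section Minor

variable {m : ℕ}

lemma minor_eq_det_submatrix (M : Matrix (Fin m) (Fin m) ℝ) {I J : Finset (Fin m)} {k : ℕ}
    (hI : #I = k) (hJ : #J = k) :
    minor M (I, J) = (M.submatrix (I.orderEmbOfFin hI) (J.orderEmbOfFin hJ)).det := by
  subst hI
  exact dif_pos hJ.symm

lemma card_eq_of_minor_ne_zero {M : Matrix (Fin m) (Fin m) ℝ} {I J : Finset (Fin m)}
    (h : minor M (I, J) ≠ 0) : #I = #J :=
  by_contra fun hc => h (dif_neg hc)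

lemma minor_transpose (M : Matrix (Fin m) (Fin m) ℝ) (I J : Finset (Fin m)) :
    minor Mᵀ (J, I) = minor M (I, J) := by
  by_cases h : #I = #J
  · rw [minor_eq_det_submatrix Mᵀ h.symm rfl, minor_eq_det_submatrix M rfl h.symm, ← det_transpose,
      transpose_submatrix, transpose_transpose]
  · rw [minor, dif_neg (Ne.symm h), minor, dif_neg h]

lemma minor_eq_zero_of_row_eq_one {M : Matrix (Fin m) (Fin m) ℝ} {x : Fin m}
    (hrow : ∀ j, M x j = (1 : Matrix (Fin m) (Fin m) ℝ) x j) {I J : Finset (Fin m)}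
    (hI : x ∈ I) (hJ : x ∉ J) : minor M (I, J) = 0 := by
  by_cases h : #I = #J
  · rw [minor_eq_det_submatrix _ rfl h.symm]
    obtain ⟨i, hi⟩ : x ∈ Set.range (I.orderEmbOfFin rfl) := by rwa [range_orderEmbOfFin]
    refine det_eq_zero_of_row_eq_zero i fun j => ?_
    rw [submatrix_apply, hi, hrow, one_apply_ne]
    exact fun hx => hJ (hx ▸ orderEmbOfFin_mem _ _ _)
  · exact dif_neg h

lemma minor_eq_zero_of_col_eq_one {M : Matrix (Fin m) (Fin m) ℝ} {x : Fin m}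
    (hcol : ∀ i, M i x = (1 : Matrix (Fin m) (Fin m) ℝ) i x) {I J : Finset (Fin m)}
    (hI : x ∉ I) (hJ : x ∈ J) : minor M (I, J) = 0 := by
  rw [← minor_transpose]
  refine minor_eq_zero_of_row_eq_one (fun j => ?_) hJ hI
  simp only [transpose_apply, hcol, one_apply, eq_comm]

lemma mem_iff_mem_of_minor_ne_zero {M : Matrix (Fin m) (Fin m) ℝ} {x : Fin m}
    (hrow : ∀ j, M x j = (1 : Matrix (Fin m) (Fin m) ℝ) x j)
    (hcol : ∀ i, M i x = (1 : Matrix (Fin m) (Fin m) ℝ) i x) {I J : Finset (Fin m)}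
    (h : minor M (I, J) ≠ 0) : x ∈ I ↔ x ∈ J :=
  ⟨fun hI => by_contra fun hJ => h (minor_eq_zero_of_row_eq_one hrow hI hJ),
    fun hJ => by_contra fun hI => h (minor_eq_zero_of_col_eq_one hcol hI hJ)⟩

lemma minor_self_one_add_mul {r : Type*} [Fintype r] [DecidableEq r] (A : Matrix (Fin m) r ℝ)
    (B : Matrix r (Fin m) ℝ) (I : Finset (Fin m)) :
    minor (1 + A * B) (I, I) = (1 + of fun t u => ∑ x ∈ I, B t x * A x u).det := by
  set f := I.orderEmbOfFin rfl
  have hsub : (1 + A * B).submatrix f f = 1 + A.submatrix f id * B.submatrix id f := by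
    rw [← submatrix_mul _ _ _ id _ Function.bijective_id, ← submatrix_one_embedding f.toEmbedding]
    rfl
  rw [minor_eq_det_submatrix _ rfl rfl, hsub, det_one_add_mul_comm]
  congr 2
  ext t u
  simp only [mul_apply, submatrix_apply, id_eq, of_apply]
  exact sum_orderEmbOfFin I rfl fun x => B t x * A x u

lemma minor_insert_erase {M : Matrix (Fin m) (Fin m) ℝ} {x y : Fin m}
    (hxy : ∀ z, z ≠ x → z ≠ y → (z < x ↔ z < y))
    (hrow : ∀ i, i ≠ x → i ≠ y → ∀ j, M i j = (1 : Matrix (Fin m) (Fin m) ℝ) i j)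
    (hcol : ∀ j, j ≠ x → j ≠ y → ∀ i, M i j = (1 : Matrix (Fin m) (Fin m) ℝ) i j)
    {I : Finset (Fin m)} (hx : x ∈ I) (hy : y ∉ I) :
    minor M (I, insert y (I.erase x)) = M x y := by
  set J := insert y (I.erase x)
  have hJ : #J = #I := by
    rw [card_insert_of_notMem (fun h => hy (mem_of_mem_erase h)), card_erase_add_one hx]
  set f := I.orderEmbOfFin rfl
  have hfI : ∀ i, f i ∈ I := orderEmbOfFin_mem I rfl
  have hfy : ∀ i, f i ≠ y := fun i h => hy (h ▸ hfI i)
  have hg : ∀ j, J.orderEmbOfFin hJ j = if f j = x then y else f j := by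
    refine congrFun (orderEmbOfFin_unique hJ (fun j => ?_) fun i j hij => ?_).symm
    · split_ifs with h
      · exact mem_insert_self _ _
      · exact mem_insert_of_mem (mem_erase.2 ⟨h, hfI j⟩)
    · have hlt : f i < f j := f.strictMono hij
      split_ifs with hi hj hj
      · exact absurd (f.injective (hi.trans hj.symm)) hij.ne
      · have hxj : x < f j := hi ▸ hlt
        exact lt_of_le_of_ne (not_lt.1 fun h => lt_asymm hxj ((hxy _ hj (hfy j)).2 h))
          (fun h => hfy j h.symm)
      · exact (hxy _ hi (hfy i)).1 (hj ▸ hlt)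
      · exact hlt
  have hdiag : M.submatrix f (J.orderEmbOfFin hJ) =
      diagonal fun i => if f i = x then M x y else 1 := by
    ext i j
    rw [submatrix_apply, hg]
    rcases eq_or_ne i j with rfl | hij
    · rw [diagonal_apply_eq]
      split_ifs with hi
      · rw [hi]
      · rw [hrow _ hi (hfy i), one_apply_eq]
    · have hfij : f i ≠ f j := f.injective.ne hij
      rw [diagonal_apply_ne _ hij]
      split_ifs with hj
      · rw [hrow _ (hj ▸ hfij) (hfy i), one_apply_ne (hfy i)]
      · by_cases hi : f i = x
        · rw [hi, hcol _ hj (hfy j), one_apply_ne (hi ▸ hfij)]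
        · rw [hrow _ hi (hfy i), one_apply_ne hfij]
  rw [minor_eq_det_submatrix M rfl hJ, hdiag, det_diagonal, prod_orderEmbOfFin I rfl
    (fun z => if z = x then M x y else 1), prod_ite_eq' I x, if_pos hx]

lemma eq_one_add_mul_of_row_eq_one {r : Type*} [Fintype r] {M : Matrix (Fin m) (Fin m) ℝ}
    {v : r → Fin m} (hv : Function.Injective v)
    (hrow : ∀ i, i ∉ Set.range v → ∀ j, M i j = (1 : Matrix (Fin m) (Fin m) ℝ) i j) :
    M = 1 + (of fun i t => if i = v t then (1 : ℝ) else 0) * of fun t j => (M - 1) (v t) j := by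
  ext i j
  simp only [Matrix.add_apply, mul_apply, of_apply, ite_mul, one_mul, zero_mul]
  by_cases hi : i ∈ Set.range v
  · obtain ⟨t, rfl⟩ := hi
    rw [Fintype.sum_eq_single t fun u hu => if_neg (hv.ne hu.symm), if_pos rfl, Matrix.sub_apply,
      add_sub_cancel]
  · rw [hrow i hi j, left_eq_add]
    exact sum_eq_zero fun t _ => if_neg fun h => hi ⟨t, h.symm⟩

lemma minor_self_of_row_eq_one {r : Type*} [Fintype r] [DecidableEq r]
    {M : Matrix (Fin m) (Fin m) ℝ} {v : r → Fin m} (hv : Function.Injective v)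
    (hrow : ∀ i, i ∉ Set.range v → ∀ j, M i j = (1 : Matrix (Fin m) (Fin m) ℝ) i j)
    (I : Finset (Fin m)) :
    minor M (I, I) = (1 + of fun t u => if v u ∈ I then (M - 1) (v t) (v u) else 0).det := by
  conv_lhs => rw [eq_one_add_mul_of_row_eq_one hv hrow]
  rw [minor_self_one_add_mul]
  congr 2
  ext t u
  simp only [of_apply, mul_ite, mul_one, mul_zero, sum_ite_eq']

end Minor

section Givens

variable {m k : ℕ} {θ : ℝ} {a b : Fin m}

lemma givensRot_apply_of_row_ne (ha : (a : ℕ) = k) (hb : (b : ℕ) = k + 1) {i : Fin m}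
    (hia : i ≠ a) (hib : i ≠ b) (j : Fin m) :
    givensRot m k θ i j = (1 : Matrix (Fin m) (Fin m) ℝ) i j := by
  have h1 : (i : ℕ) ≠ k := fun h => hia (Fin.ext (h.trans ha.symm))
  have h2 : (i : ℕ) ≠ k + 1 := fun h => hib (Fin.ext (h.trans hb.symm))
  simp [givensRot, one_apply, h1, h2]

lemma givensRot_apply_of_col_ne (ha : (a : ℕ) = k) (hb : (b : ℕ) = k + 1) {j : Fin m}
    (hja : j ≠ a) (hjb : j ≠ b) (i : Fin m) :
    givensRot m k θ i j = (1 : Matrix (Fin m) (Fin m) ℝ) i j := by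
  have h1 : (j : ℕ) ≠ k := fun h => hja (Fin.ext (h.trans ha.symm))
  have h2 : (j : ℕ) ≠ k + 1 := fun h => hjb (Fin.ext (h.trans hb.symm))
  simp [givensRot, one_apply, h1, h2]

lemma givensRot_apply_left_left (ha : (a : ℕ) = k) :
    givensRot m k θ a a = Real.cos θ := by
  simp [givensRot, ha]

lemma givensRot_apply_right_right (hb : (b : ℕ) = k + 1) :
    givensRot m k θ b b = Real.cos θ := by
  simp [givensRot, hb]

lemma givensRot_apply_left_right (ha : (a : ℕ) = k) (hb : (b : ℕ) = k + 1) :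
    givensRot m k θ a b = Real.sin θ := by
  simp [givensRot, ha, hb]

lemma givensRot_apply_right_left (ha : (a : ℕ) = k) (hb : (b : ℕ) = k + 1) :
    givensRot m k θ b a = -Real.sin θ := by
  simp [givensRot, ha, hb]

lemma givensRot_minor_self (ha : (a : ℕ) = k) (hb : (b : ℕ) = k + 1) (I : Finset (Fin m)) :
    minor (givensRot m k θ) (I, I) = if (a ∈ I ↔ b ∈ I) then 1 else Real.cos θ := by
  have hab : a ≠ b := Fin.ne_of_val_ne (by omega)
  have hv : Function.Injective ![a, b] := by
    intro s t; fin_cases s <;> fin_cases t <;> simp [hab, hab.symm]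
  have hrow : ∀ i, i ∉ Set.range ![a, b] → ∀ j,
      givensRot m k θ i j = (1 : Matrix (Fin m) (Fin m) ℝ) i j :=
    fun i hi => givensRot_apply_of_row_ne ha hb (fun h => hi ⟨0, h.symm⟩) (fun h => hi ⟨1, h.symm⟩)
  rw [minor_self_of_row_eq_one hv hrow, det_fin_two]
  simp only [Matrix.add_apply, of_apply, Matrix.sub_apply, one_apply, cons_val_zero, cons_val_one,
    hab, hab.symm, zero_ne_one, one_ne_zero, if_true, if_false,
    givensRot_apply_left_left ha, givensRot_apply_left_right ha hb,
    givensRot_apply_right_left ha hb, givensRot_apply_right_right hb]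
  by_cases haI : a ∈ I <;> by_cases hbI : b ∈ I <;> simp only [haI, hbI, if_true,
    if_false, iff_self, iff_true, iff_false, not_true_eq_false] <;>
    nlinarith [Real.sin_sq_add_cos_sq θ]

lemma givensRot_minor_insert_erase (ha : (a : ℕ) = k) (hb : (b : ℕ) = k + 1) {x y : Fin m}
    (hxy : x = a ∧ y = b ∨ x = b ∧ y = a) {I : Finset (Fin m)} (hx : x ∈ I) (hy : y ∉ I) :
    minor (givensRot m k θ) (I, insert y (I.erase x)) = givensRot m k θ x y := by
  have hne : ∀ z, z ≠ x → z ≠ y → z ≠ a ∧ z ≠ b := by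
    rcases hxy with ⟨rfl, rfl⟩ | ⟨rfl, rfl⟩ <;> tauto
  refine minor_insert_erase (fun z hzx hzy => ?_) (fun i hix hiy => ?_) (fun j hjx hjy => ?_) hx hy
  · have hzk : (z : ℕ) ≠ k := fun h => (hne z hzx hzy).1 (Fin.ext (h.trans ha.symm))
    rcases hxy with ⟨rfl, rfl⟩ | ⟨rfl, rfl⟩ <;> simp only [Fin.lt_def, ha, hb] <;> omega
  · exact givensRot_apply_of_row_ne ha hb (hne i hix hiy).1 (hne i hix hiy).2
  · exact givensRot_apply_of_col_ne ha hb (hne j hjx hjy).1 (hne j hjx hjy).2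

lemma givensRot_minor_ne_zero (ha : (a : ℕ) = k) (hb : (b : ℕ) = k + 1) {I J : Finset (Fin m)}
    (h : minor (givensRot m k θ) (I, J) ≠ 0) :
    I = J ∨ (J = insert b (I.erase a) ∧ a ∈ I ∧ b ∉ I) ∨
      (J = insert a (I.erase b) ∧ b ∈ I ∧ a ∉ I) := by
  have hab : a ≠ b := Fin.ne_of_val_ne (by omega)
  refine eq_or_swap_of_forall_mem_iff hab (card_eq_of_minor_ne_zero h) fun x hxa hxb => ?_
  exact mem_iff_mem_of_minor_ne_zero (givensRot_apply_of_row_ne ha hb hxa hxb)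
    (givensRot_apply_of_col_ne ha hb hxa hxb) h

lemma card_givensRot_minor_self_eq_one (ha : (a : ℕ) = k) (hb : (b : ℕ) = k + 1) :
    #{p : Finset (Fin m) × Finset (Fin m) |
      p.1 = p.2 ∧ (a ∈ p.1 ↔ b ∈ p.1) ∧ minor (givensRot m k θ) p = 1} = 2 ^ (m - 1) := by
  rw [card_filter_fst_eq_snd_and, filter_congr fun I _ => and_iff_left_of_imp fun h => by
    rw [givensRot_minor_self ha hb, if_pos h],
    card_filter_mem_iff_mem (Fin.ne_of_val_ne (by omega)),
    Fintype.card_fin]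

lemma card_givensRot_minor_self_eq_cos (ha : (a : ℕ) = k) (hb : (b : ℕ) = k + 1) :
    #{p : Finset (Fin m) × Finset (Fin m) |
      p.1 = p.2 ∧ ¬(a ∈ p.1 ↔ b ∈ p.1) ∧ minor (givensRot m k θ) p = Real.cos θ} =
      2 ^ (m - 1) := by
  rw [card_filter_fst_eq_snd_and, filter_congr fun I _ => and_iff_left_of_imp fun h => by
    rw [givensRot_minor_self ha hb, if_neg h],
    card_filter_not_mem_iff_mem (Fin.ne_of_val_ne (by omega)),
    Fintype.card_fin]

lemma card_givensRot_minor_insert_erase (ha : (a : ℕ) = k) (hb : (b : ℕ) = k + 1) {x y : Fin m}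
    (hxy : x = a ∧ y = b ∨ x = b ∧ y = a) :
    #{p : Finset (Fin m) × Finset (Fin m) | p.2 = insert y (p.1.erase x) ∧ x ∈ p.1 ∧ y ∉ p.1 ∧
      minor (givensRot m k θ) p = givensRot m k θ x y} = 2 ^ (m - 2) := by
  have hne : x ≠ y := by
    rcases hxy with ⟨rfl, rfl⟩ | ⟨rfl, rfl⟩ <;> exact Fin.ne_of_val_ne (by omega)
  rw [card_filter_snd_eq_and (fun I : Finset (Fin m) => insert y (I.erase x))
      (fun p => x ∈ p.1 ∧ y ∉ p.1 ∧ minor (givensRot m k θ) p = givensRot m k θ x y),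
    filter_congr fun I _ => and_congr_right fun hx => and_iff_left_of_imp
      (givensRot_minor_insert_erase ha hb hxy hx),
    card_filter_mem_and_notMem hne, Fintype.card_fin]

lemma two_mul_card_givensRot_minor_ne_zero_le (ha : (a : ℕ) = k) (hb : (b : ℕ) = k + 1) :
    2 * #{p : Finset (Fin m) × Finset (Fin m) | minor (givensRot m k θ) p ≠ 0} ≤ 3 * 2 ^ m := by
  have hcover := card_le_card (monotone_filter_right univ
    (p := fun p => minor (givensRot m k θ) p ≠ 0) (q := fun p =>
      (p.1 = p.2 ∧ (a ∈ p.1 ↔ b ∈ p.1) ∧ minor (givensRot m k θ) p = 1) ∨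
      (p.1 = p.2 ∧ ¬(a ∈ p.1 ↔ b ∈ p.1) ∧ minor (givensRot m k θ) p = Real.cos θ) ∨
      (p.2 = insert b (p.1.erase a) ∧ a ∈ p.1 ∧ b ∉ p.1 ∧
        minor (givensRot m k θ) p = givensRot m k θ a b) ∨
      (p.2 = insert a (p.1.erase b) ∧ b ∈ p.1 ∧ a ∉ p.1 ∧
        minor (givensRot m k θ) p = givensRot m k θ b a)) fun p _ hp => by
    obtain ⟨I, J⟩ := p
    rcases givensRot_minor_ne_zero ha hb hp with rfl | ⟨rfl, hI⟩ | ⟨rfl, hI⟩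
    · by_cases h : a ∈ I ↔ b ∈ I
      · exact .inl ⟨rfl, h, by rw [givensRot_minor_self ha hb, if_pos h]⟩
      · exact .inr (.inl ⟨rfl, h, by rw [givensRot_minor_self ha hb, if_neg h]⟩)
    · exact .inr (.inr (.inl ⟨rfl, hI.1, hI.2,
        givensRot_minor_insert_erase ha hb (.inl ⟨rfl, rfl⟩) hI.1 hI.2⟩))
    · exact .inr (.inr (.inr ⟨rfl, hI.1, hI.2,
        givensRot_minor_insert_erase ha hb (.inr ⟨rfl, rfl⟩) hI.1 hI.2⟩)))
  simp only [filter_or] at hcover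
  have hunion := hcover.trans <| (card_union_le _ _).trans <| Nat.add_le_add_left
    ((card_union_le _ _).trans (Nat.add_le_add_left (card_union_le _ _) _)) _
  rw [card_givensRot_minor_self_eq_one ha hb, card_givensRot_minor_self_eq_cos ha hb,
    card_givensRot_minor_insert_erase ha hb (.inl ⟨rfl, rfl⟩),
    card_givensRot_minor_insert_erase ha hb (.inr ⟨rfl, rfl⟩)] at hunion
  have hm : 2 ≤ m := by have := b.isLt; omega
  have hpow : 2 ^ m = 2 ^ (m - 2) * 4 := by
    rw [show 4 = 2 ^ 2 from rfl, ← pow_add, Nat.sub_add_cancel hm]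
  have hpow' : 2 ^ (m - 1) = 2 ^ (m - 2) * 2 := by
    rw [← pow_succ]; congr 1; omega
  omega

end Givens

/-- for `sin θ ≠ 0` and `cos θ ≠ 0`, the planar rotation `R_k(θ)` of
`ℝ^{2n}` has at most `(3/2) ⬝ 2^{2n}` pairs `(I,J)` of equal-size subsets with
nonzero minor: exactly `2^{2n-1}` pairs give minor `1` (the pairs `I = J`
containing both or neither of `k, k+1`), `2^{2n-1}` give `cos θ` (the pairs
`I = J` containing exactly one of them), and `2^{2n-2} + 2^{2n-2}` give `± sin θ`
(the off-diagonal pairs exchanging `k` and `k+1`). -/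
theorem givens_minor_count (n : ℕ) (k : ℕ) (hk : k + 1 < 2 * n) (θ : ℝ) :
    let a : Fin (2 * n) := ⟨k, by omega⟩
    let b : Fin (2 * n) := ⟨k + 1, hk⟩
    (2 * (Finset.univ.filter (fun p : Finset (Fin (2 * n)) × Finset (Fin (2 * n)) =>
        p.1.card = p.2.card ∧ minor (givensRot (2 * n) k θ) p ≠ 0)).card
      ≤ 3 * 2 ^ (2 * n)) ∧
    (Finset.univ.filter (fun p : Finset (Fin (2 * n)) × Finset (Fin (2 * n)) =>
        p.1 = p.2 ∧ (a ∈ p.1 ↔ b ∈ p.1) ∧ minor (givensRot (2 * n) k θ) p = 1)).card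
      = 2 ^ (2 * n - 1) ∧
    (Finset.univ.filter (fun p : Finset (Fin (2 * n)) × Finset (Fin (2 * n)) =>
        p.1 = p.2 ∧ ¬(a ∈ p.1 ↔ b ∈ p.1) ∧
          minor (givensRot (2 * n) k θ) p = Real.cos θ)).card
      = 2 ^ (2 * n - 1) ∧
    (Finset.univ.filter (fun p : Finset (Fin (2 * n)) × Finset (Fin (2 * n)) =>
        p.2 = insert b (p.1.erase a) ∧ a ∈ p.1 ∧ b ∉ p.1 ∧
          minor (givensRot (2 * n) k θ) p = Real.sin θ)).card
      = 2 ^ (2 * n - 2) ∧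
    (Finset.univ.filter (fun p : Finset (Fin (2 * n)) × Finset (Fin (2 * n)) =>
        p.2 = insert a (p.1.erase b) ∧ b ∈ p.1 ∧ a ∉ p.1 ∧
          minor (givensRot (2 * n) k θ) p = -Real.sin θ)).card
      = 2 ^ (2 * n - 2) := by
  intro a b
  have ha : (a : ℕ) = k := rfl
  have hb : (b : ℕ) = k + 1 := rfl
  refine ⟨?_, card_givensRot_minor_self_eq_one ha hb, card_givensRot_minor_self_eq_cos ha hb,
    ?_, ?_⟩
  · exact (Nat.mul_le_mul_left 2 (card_le_card (monotone_filter_right _ fun _ _ hp => hp.2))).trans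
      (two_mul_card_givensRot_minor_ne_zero_le ha hb)
  · simpa only [givensRot_apply_left_right ha hb] using
      card_givensRot_minor_insert_erase (θ := θ) ha hb (.inl ⟨rfl, rfl⟩)
  · simpa only [givensRot_apply_right_left ha hb] using
      card_givensRot_minor_insert_erase (θ := θ) ha hb (.inr ⟨rfl, rfl⟩)
end
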